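/- Let V be a vector space over ℂ and let d, δ : V → V be ℂ-linear maps with d ∘ d = 0, δ ∘ δ = 0 and d ∘ δ = −δ ∘ d, and let δ̄ denote the map induced by δ on W := V/range(d). Then the map induced in cohomology by the projection p : (V, δ) → (W, δ̄), from (ker δ)/range(δ) to (ker δ̄)/range(δ̄), is surjective if and only if range(d ∘ δ) = range(d) ∩ range(δ). -/
import Mathlib


open LinearMap

variable {V : Type*} [AddCommGroup V] [Module ℂ V]

/-- The map `δ̄` induced by `δ` on the quotient `W = V / range d`; it is well defined
because `d ∘ δ = -(δ ∘ d)` implies `δ (range d) ⊆ range d`. -/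
noncomputable def deltaBar (d δ : V →ₗ[ℂ] V) (hanti : d ∘ₗ δ = -(δ ∘ₗ d)) :
    (V ⧸ LinearMap.range d) →ₗ[ℂ] (V ⧸ LinearMap.range d) :=
  Submodule.mapQ _ _ δ (by
    rintro x ⟨y, rfl⟩
    have h1 : d (δ y) = -(δ (d y)) := by
      have := congrArg (fun f : V →ₗ[ℂ] V => f y) hanti
      simpa using this
    refine Submodule.mem_comap.2 ⟨-(δ y), ?_⟩
    simp [h1])

/-- The map from `ker δ` to `ker δ̄` induced by the projection `V → V / range d`. -/
noncomputable def kerProj (d δ : V →ₗ[ℂ] V) (hanti : d ∘ₗ δ = -(δ ∘ₗ d)) :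
    (LinearMap.ker δ : Submodule ℂ V) →ₗ[ℂ]
      (LinearMap.ker (deltaBar d δ hanti) : Submodule ℂ (V ⧸ LinearMap.range d)) :=
  LinearMap.codRestrict _
    ((LinearMap.range d).mkQ ∘ₗ (LinearMap.ker δ).subtype)
    (fun x => by
      have hx : δ (x : V) = 0 := x.2
      simp only [LinearMap.mem_ker, LinearMap.comp_apply, Submodule.coe_subtype,
        Submodule.mkQ_apply]
      rw [deltaBar, Submodule.mapQ_apply, hx]
      simp)

/-- The map induced in cohomology by the projection `p : (V, δ) → (V / range d, δ̄)`,
from `(ker δ) / range δ` to `(ker δ̄) / range δ̄`. -/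
noncomputable def cohProj (d δ : V →ₗ[ℂ] V) (hanti : d ∘ₗ δ = -(δ ∘ₗ d)) :
    ((LinearMap.ker δ : Submodule ℂ V) ⧸
        (LinearMap.range δ).comap (LinearMap.ker δ).subtype) →ₗ[ℂ]
      ((LinearMap.ker (deltaBar d δ hanti) : Submodule ℂ (V ⧸ LinearMap.range d)) ⧸
        (LinearMap.range (deltaBar d δ hanti)).comap
          (LinearMap.ker (deltaBar d δ hanti)).subtype) :=
  Submodule.mapQ _ _ (kerProj d δ hanti) (by
    intro x hx
    simp only [Submodule.mem_comap, LinearMap.mem_range, Submodule.coe_subtype] at hx ⊢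
    obtain ⟨y, hy⟩ := hx
    refine ⟨(LinearMap.range d).mkQ y, ?_⟩
    have : (kerProj d δ hanti x : V ⧸ LinearMap.range d) = (LinearMap.range d).mkQ (x : V) := rfl
    rw [this, deltaBar, Submodule.mkQ_apply, Submodule.mkQ_apply, Submodule.mapQ_apply, hy])

/-- Surjectivity characterization from the proof of Theorem 4.2 (algebraic form): the
map induced in cohomology by the projection `p : (V, δ) → (V / range d, δ̄)` is
surjective iff `range (d ∘ δ) = range d ⊓ range δ`. -/
theorem stmt7 {V : Type*} [AddCommGroup V] [Module ℂ V]
    (d δ : V →ₗ[ℂ] V)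
    (hdd : d ∘ₗ d = 0)
    (hδδ : δ ∘ₗ δ = 0)
    (hanti : d ∘ₗ δ = -(δ ∘ₗ d)) :
    Function.Surjective (cohProj d δ hanti) ↔
      LinearMap.range (d ∘ₗ δ) = LinearMap.range d ⊓ LinearMap.range δ := by
  have hadx : ∀ x, d (δ x) = -(δ (d x)) := fun x => by
    have := congrArg (fun f : V →ₗ[ℂ] V => f x) hanti
    simpa using this
  have hδδ' : ∀ x, δ (δ x) = 0 := fun x => by
    have := congrArg (fun f : V →ₗ[ℂ] V => f x) hδδ
    simpa using this
  have hdBar : ∀ x : V, deltaBar d δ hanti (Submodule.Quotient.mk x) =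
      Submodule.Quotient.mk (δ x) := fun x => rfl
  have hkP : ∀ z : (LinearMap.ker δ : Submodule ℂ V),
      ((kerProj d δ hanti z : _) : V ⧸ LinearMap.range d) =
        Submodule.Quotient.mk (z : V) := fun z => rfl
  have hcP : ∀ z : (LinearMap.ker δ : Submodule ℂ V),
      cohProj d δ hanti (Submodule.Quotient.mk z) =
        Submodule.Quotient.mk (kerProj d δ hanti z) := fun z => rfl
  constructor
  · intro hsurj
    apply le_antisymm
    · rintro _ ⟨x, rfl⟩
      refine Submodule.mem_inf.2 ⟨⟨δ x, rfl⟩, ⟨-(d x), ?_⟩⟩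
      simp [hadx x]
    · rintro a ha
      obtain ⟨⟨y, hy⟩, ⟨v, hv⟩⟩ := Submodule.mem_inf.1 ha
      -- δ v = a = d y, so [v] ∈ ker δ̄
      have hkmem : Submodule.Quotient.mk v ∈ LinearMap.ker (deltaBar d δ hanti) := by
        rw [LinearMap.mem_ker, hdBar, hv, ← hy]
        exact (Submodule.Quotient.mk_eq_zero _).2 ⟨y, rfl⟩
      set k : (LinearMap.ker (deltaBar d δ hanti) : Submodule ℂ (V ⧸ LinearMap.range d)) :=
        ⟨Submodule.Quotient.mk v, hkmem⟩ with hk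
      obtain ⟨q, hq⟩ := hsurj (Submodule.Quotient.mk k)
      obtain ⟨z, rfl⟩ := Submodule.Quotient.mk_surjective _ q
      rw [hcP] at hq
      have hdiff := (Submodule.Quotient.eq _).1 hq
      obtain ⟨w, hw⟩ := Submodule.mem_comap.1 hdiff
      obtain ⟨u, rfl⟩ := Submodule.Quotient.mk_surjective _ w
      -- hw : δ̄ [u] = (kerProj z - k).1
      have hw' : (Submodule.Quotient.mk (δ u) : V ⧸ LinearMap.range d) =
          Submodule.Quotient.mk ((z : V) - v) := by
        rw [← hdBar]
        calc deltaBar d δ hanti (Submodule.Quotient.mk u)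
            = ((kerProj d δ hanti z - k : _) : V ⧸ LinearMap.range d) := hw
          _ = Submodule.Quotient.mk ((z : V) - v) := by
              push_cast [hkP, hk, Submodule.Quotient.mk_sub]
              rfl
      obtain ⟨t, ht⟩ := (Submodule.Quotient.eq _).1 hw'
      -- ht : d t = δ u - ((z:V) - v)
      refine ⟨-t, ?_⟩
      have hz0 : δ (z : V) = 0 := z.2
      have h1 : δ (d t) = δ v := by
        have : δ (d t) = δ (δ u) - (δ (z : V) - δ v) := by rw [ht]; simp
        rw [hδδ' u, hz0] at this; simpa using this
      have h2 : d (δ (-t)) = δ v := by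
        rw [map_neg, map_neg, hadx t, neg_neg, h1]
      simpa [hv] using h2
  · intro heq q
    obtain ⟨k, rfl⟩ := Submodule.Quotient.mk_surjective _ q
    obtain ⟨v, hv⟩ := Submodule.Quotient.mk_surjective _ (k : V ⧸ LinearMap.range d)
    have hk2 : (Submodule.Quotient.mk (δ v) : V ⧸ LinearMap.range d) = 0 := by
      rw [← hdBar, hv]; exact k.2
    have hδv : δ v ∈ LinearMap.range d := (Submodule.Quotient.mk_eq_zero _).1 hk2
    have hmem : δ v ∈ LinearMap.range (d ∘ₗ δ) := by
      rw [heq]; exact Submodule.mem_inf.2 ⟨hδv, ⟨v, rfl⟩⟩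
    obtain ⟨t, ht⟩ := hmem
    -- ht : d (δ t) = δ v
    have ht' : d (δ t) = δ v := ht
    have hz : (v + d t) ∈ LinearMap.ker δ := by
      have h3 : δ (d t) = -(d (δ t)) := neg_eq_iff_eq_neg.mp (hadx t).symm
      simp [LinearMap.mem_ker, h3, ht']
    refine ⟨Submodule.Quotient.mk ⟨v + d t, hz⟩, ?_⟩
    rw [hcP]
    congr 1
    apply Subtype.ext
    rw [hkP, ← hv]
    exact (Submodule.Quotient.eq _).2 ⟨t, by simp⟩
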